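/- Let f : [n] → ℝ with bounds l = −u, u : {1,…,n−1} → ℝ with u(t) > 0 for all t, and u_M = max_t u(t). If (x,y) is a violated pair, then the total number of violated unordered pairs of f is at least min{ vs_f(x,y) / (2·u_M), n − 1 }. -/

import Mathlib

/-!
With `l = -u`, the quasimetric is the path length `m(a, b) = ∑_{min a b ≤ t < max a b} u t`
and `vs_f(a, b) = |f a - f b| - m(a, b)`. If neither `(z, x)` nor `(z, y)` is violated, the
triangle inequality for `|f · - f ·|` gives `vs_f(x, y) ≤ 2 m(z, [x, y])`, twice the length of
the gap between `z` and `[x, y]`, which is at most `2 u_M` times the number of steps in that gap.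
So every `z` within fewer than `⌈vs_f(x, y) / (2 u_M)⌉` steps of `[x, y]` forms a violated pair
with `x` or with `y`; distinct such `z` give distinct pairs, and together with `(x, y)` itself
this yields at least `min(⌈vs_f(x, y) / (2 u_M)⌉, n - 1)` violated pairs.
-/

open Finset
open scoped Classical

/-- The one-dimensional quasimetric of bounds `(l,u)`. -/
def m1 (l u : ℕ → ℝ) (x y : ℕ) : ℝ :=
  (∑ t ∈ Finset.Ico y x, u t) - ∑ t ∈ Finset.Ico x y, l t

/-- The violation score of a pair `(x,y)` for `h : [n] → ℝ`. -/
def vs1 (l u : ℕ → ℝ) (h : ℕ → ℝ) (x y : ℕ) : ℝ :=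
  max (h x - h y - m1 l u x y) (h y - h x - m1 l u y x)

noncomputable def violatedPairs (l u f : ℕ → ℝ) (n : ℕ) : Finset (ℕ × ℕ) :=
  ((Icc 1 n) ×ˢ (Icc 1 n)).filter (fun p => p.1 < p.2 ∧ 0 < vs1 l u f p.1 p.2)

lemma vs1_comm (l u f : ℕ → ℝ) (a b : ℕ) : vs1 l u f a b = vs1 l u f b a :=
  max_comm _ _

lemma mem_violatedPairs_or_swap {l u f : ℕ → ℝ} {n a b : ℕ} (ha : a ∈ Icc 1 n)
    (hb : b ∈ Icc 1 n) (hab : a ≠ b) (h : 0 < vs1 l u f a b) :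
    (a, b) ∈ violatedPairs l u f n ∨ (b, a) ∈ violatedPairs l u f n := by
  rcases hab.lt_or_gt with hlt | hgt
  · exact .inl (mem_filter.2 ⟨mem_product.2 ⟨ha, hb⟩, hlt, h⟩)
  · exact .inr (mem_filter.2 ⟨mem_product.2 ⟨hb, ha⟩, hgt, vs1_comm l u f a b ▸ h⟩)

lemma card_le_card_add_one_of_forall_mem {α : Type*} [DecidableEq α] {P : Finset (α × α)}
    {C : Finset α} {x y : α} (hxy : (x, y) ∈ P)
    (hC : ∀ z ∈ C, z ≠ x → z ≠ y → ∃ w, (w = x ∨ w = y) ∧ ((z, w) ∈ P ∨ (w, z) ∈ P)) :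
    #C ≤ #P + 1 := by
  let g : α × α → α := fun p => if p.1 = x ∨ p.1 = y then p.2 else p.1
  have hsurj : Set.SurjOn g P (C.erase x) := by
    intro z hz
    obtain ⟨hzx, hzC⟩ := mem_erase.1 hz
    by_cases hzy : z = y
    · exact ⟨(x, y), hxy, by simp [g, hzy]⟩
    obtain ⟨w, hw, hzw | hwz⟩ := hC z hzC hzx hzy
    · exact ⟨(z, w), hzw, by simp [g, hzx, hzy]⟩
    · exact ⟨(w, z), hwz, by simp [g, hw]⟩
  have := card_le_card_of_surjOn g hsurj
  have := pred_card_le_card_erase (s := C) (a := x)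
  omega

lemma min_le_card_filter_Icc {n k x y : ℕ} (hk : 1 ≤ k) (hx : 1 ≤ x) (hxy : x < y)
    (hy : y ≤ n) : min (k + 1) n ≤ #((Icc 1 n).filter (fun z => x < z + k ∧ z < y + k)) := by
  have : (Icc 1 n).filter (fun z => x < z + k ∧ z < y + k)
      = Icc (max 1 (x + 1 - k)) (min n (y + k - 1)) := by
    ext z; simp only [mem_filter, mem_Icc]; omega
  rw [this, Nat.card_Icc]
  omega

lemma min_le_of_min_ceil_add_one_le {c : ℝ} {n m : ℕ} (h : min (⌈c⌉₊ + 1) n ≤ m + 1) :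
    min c ((n : ℝ) - 1) ≤ m := by
  rcases le_total (⌈c⌉₊ + 1) n with hcn | hnc
  · calc min c ((n : ℝ) - 1) ≤ ⌈c⌉₊ := (min_le_left _ _).trans (Nat.le_ceil _)
      _ ≤ m := by exact_mod_cast (by omega : ⌈c⌉₊ ≤ m)
  · calc min c ((n : ℝ) - 1) ≤ (n : ℝ) - 1 := min_le_right _ _
      _ ≤ m := by linarith [(by exact_mod_cast (by omega : n ≤ m + 1) : (n : ℝ) ≤ m + 1)]

section NegBounds

variable (u f : ℕ → ℝ)

lemma m1_neg (a b : ℕ) :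
    m1 (fun t => -u t) u a b = ∑ t ∈ Ico b a, u t + ∑ t ∈ Ico a b, u t := by
  simp [m1, sum_neg_distrib]

lemma m1_neg_comm (a b : ℕ) : m1 (fun t => -u t) u a b = m1 (fun t => -u t) u b a := by
  rw [m1_neg, m1_neg, add_comm]

lemma vs1_neg_eq (a b : ℕ) :
    vs1 (fun t => -u t) u f a b = |f a - f b| - m1 (fun t => -u t) u a b := by
  rw [vs1, m1_neg_comm u b a, max_sub_sub_right, abs_eq_max_neg, neg_sub]

lemma m1_neg_add_m1_neg {x y : ℕ} (hxy : x ≤ y) (z : ℕ) :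
    m1 (fun t => -u t) u z x + m1 (fun t => -u t) u z y
      = m1 (fun t => -u t) u x y + 2 * (∑ t ∈ Ico z x, u t + ∑ t ∈ Ico y z, u t) := by
  simp only [m1_neg]
  rcases le_total z x with hzx | hxz
  · rw [← sum_Ico_consecutive u hzx hxy]
    simp [Ico_eq_empty_of_le, hzx, hxy, hzx.trans hxy]
    ring
  rcases le_total z y with hzy | hyz
  · rw [← sum_Ico_consecutive u hxz hzy]
    simp [Ico_eq_empty_of_le, hxz, hzy, hxy]
  · rw [← sum_Ico_consecutive u hxy hyz]
    simp [Ico_eq_empty_of_le, hxy, hyz, hxy.trans hyz]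
    ring

lemma vs1_neg_le {x y : ℕ} (hxy : x ≤ y) (z : ℕ) :
    vs1 (fun t => -u t) u f x y ≤ vs1 (fun t => -u t) u f z x + vs1 (fun t => -u t) u f z y
      + 2 * (∑ t ∈ Ico z x, u t + ∑ t ∈ Ico y z, u t) := by
  have := m1_neg_add_m1_neg u hxy z
  have := abs_sub_comm (f x) (f z) ▸ abs_sub_le (f x) (f z) (f y)
  rw [vs1_neg_eq, vs1_neg_eq, vs1_neg_eq]
  linarith

lemma vs1_neg_pos_or_vs1_neg_pos {x y z : ℕ} (hxy : x ≤ y) {M : ℝ} (hM0 : 0 < M)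
    (hM : ∀ t ∈ Ico z x ∪ Ico y z, u t ≤ M)
    (hgap : (x - z) + (z - y) < ⌈vs1 (fun t => -u t) u f x y / (2 * M)⌉₊) :
    0 < vs1 (fun t => -u t) u f z x ∨ 0 < vs1 (fun t => -u t) u f z y := by
  by_contra! h
  have hgap' := Nat.lt_ceil.1 hgap
  rw [lt_div_iff₀ (by positivity)] at hgap'
  have hzx := sum_le_card_nsmul (Ico z x) u M fun t ht => hM t (mem_union_left _ ht)
  have hyz := sum_le_card_nsmul (Ico y z) u M fun t ht => hM t (mem_union_right _ ht)
  rw [Nat.card_Ico, nsmul_eq_mul] at hzx hyz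
  push_cast at hgap'
  linarith [vs1_neg_le u f hxy z]

end NegBounds

/-- if `(x,y)` is a violated pair, then the total number of
violated unordered pairs of `f` is at least `min{vs_f(x,y)/(2·u_M), n − 1}`. -/
theorem stmt18 (n : ℕ) (hn : 2 ≤ n)
    (u : ℕ → ℝ)
    (f : ℕ → ℝ)
    (uM : ℝ)
    (huM : uM = (Finset.Icc 1 (n - 1)).sup'
      (Finset.nonempty_Icc.mpr (by omega)) u)
    (x y : ℕ) (hx : 1 ≤ x) (hxy : x < y) (hy : y ≤ n)
    (hviol : 0 < vs1 (fun t => -u t) u f x y) :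
    min (vs1 (fun t => -u t) u f x y / (2 * uM)) ((n : ℝ) - 1)
      ≤ ((((Finset.Icc 1 n) ×ˢ (Finset.Icc 1 n)).filter
          (fun p : ℕ × ℕ => p.1 < p.2 ∧ 0 < vs1 (fun t => -u t) u f p.1 p.2)).card : ℝ) := by
  change _ ≤ (#(violatedPairs (fun t => -u t) u f n) : ℝ)
  set P := violatedPairs (fun t => -u t) u f n
  set k := ⌈vs1 (fun t => -u t) u f x y / (2 * uM)⌉₊
  rcases le_or_gt (vs1 (fun t => -u t) u f x y / (2 * uM)) 0 with hc | hc
  · exact (min_le_left _ _).trans (hc.trans (Nat.cast_nonneg _))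
  have hk : 1 ≤ k := Nat.one_le_iff_ne_zero.2 (Nat.ceil_pos.2 hc).ne'
  have huM_pos : 0 < uM := by
    have := (div_pos_iff_of_pos_left hviol).1 hc
    linarith
  have hu_le : ∀ t, 1 ≤ t → t < n → u t ≤ uM := fun t h1 h2 =>
    huM ▸ le_sup' u (mem_Icc.2 ⟨h1, by omega⟩)
  set C := (Icc 1 n).filter (fun z => x < z + k ∧ z < y + k)
  have hC : ∀ z ∈ C, z ≠ x → z ≠ y → ∃ w, (w = x ∨ w = y) ∧ ((z, w) ∈ P ∨ (w, z) ∈ P) := by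
    intro z hz hzx hzy
    obtain ⟨hzn, hxz, hzy'⟩ := by simpa only [C, mem_filter] using hz
    have hM : ∀ t ∈ Ico z x ∪ Ico y z, u t ≤ uM := by
      intro t ht
      simp only [mem_union, mem_Icc, mem_Ico] at ht hzn
      exact hu_le t (by omega) (by omega)
    rcases vs1_neg_pos_or_vs1_neg_pos u f hxy.le huM_pos hM (by omega) with h | h
    · exact ⟨x, .inl rfl, mem_violatedPairs_or_swap hzn (mem_Icc.2 ⟨hx, by omega⟩) hzx h⟩
    · exact ⟨y, .inr rfl, mem_violatedPairs_or_swap hzn (mem_Icc.2 ⟨by omega, hy⟩) hzy h⟩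
  have hxyP : (x, y) ∈ P :=
    mem_filter.2 ⟨mem_product.2 ⟨mem_Icc.2 ⟨hx, by omega⟩, mem_Icc.2 ⟨by omega, hy⟩⟩, hxy, hviol⟩
  exact min_le_of_min_ceil_add_one_le <|
    (min_le_card_filter_Icc hk hx hxy hy).trans (card_le_card_add_one_of_forall_mem hxyP hC)
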